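/- arXiv:2306.10096 — 2 statements merged into one kernel-verified Lean document; each statement's English description precedes it below -/
import Mathlib

section
/- Let y be uniformly distributed on the unit sphere S^{d-1} ⊂ ℝ^d, with d ≥ 1. Then for any ζ ≤ 1, the probability that |y₁| ≤ ζ/√d is at most (2/√π)·ζ. -/
open MeasureTheory

set_option linter.unusedSectionVars false
set_option linter.unusedVariables false
set_option maxHeartbeats 1000000

section aux
variable {E : Type*} [NormedAddCommGroup E] [InnerProductSpace ℝ E] [FiniteDimensional ℝ E]

open scoped RealInnerProductSpace

lemma exists_isometry_map_eq (a b : E) (h : ‖a‖ = ‖b‖) : ∃ T : E ≃ₗᵢ[ℝ] E, T a = b := by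
  by_cases hab : a = b
  · exact ⟨LinearIsometryEquiv.refl ℝ E, by rw [hab]; rfl⟩
  · exact ⟨Submodule.reflection (ℝ ∙ (a - b))ᗮ, Submodule.reflection_sub h⟩

end aux

lemma gamma_half_le {x : ℝ} (hx : 0 < x) :
    Real.Gamma (x + 1/2) ≤ Real.Gamma x * Real.sqrt x := by
  have hΓx : 0 < Real.Gamma x := Real.Gamma_pos_of_pos hx
  have hconv := Real.convexOn_log_Gamma.2 (Set.mem_Ioi.2 hx)
    (Set.mem_Ioi.2 (show (0:ℝ) < x + 1 by linarith))
    (by norm_num : (0:ℝ) ≤ 1/2) (by norm_num : (0:ℝ) ≤ 1/2) (by norm_num)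
  have hmid : (1/2 : ℝ) • x + (1/2 : ℝ) • (x + 1) = x + 1/2 := by
    simp [smul_eq_mul]; ring
  rw [hmid] at hconv
  have hexp := Real.exp_le_exp.2 hconv
  rw [Function.comp_apply, Real.exp_log (Real.Gamma_pos_of_pos (by linarith))] at hexp
  refine hexp.trans_eq ?_
  have h1 : Real.Gamma (x + 1) = x * Real.Gamma x := Real.Gamma_add_one hx.ne'
  simp only [Function.comp_apply, smul_eq_mul]
  rw [Real.exp_add, h1,
      show (1/2 : ℝ) * Real.log (Real.Gamma x) = Real.log (Real.Gamma x) * (1/2) by ring,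
      show (1/2 : ℝ) * Real.log (x * Real.Gamma x) = Real.log (x * Real.Gamma x) * (1/2) by ring,
      ← Real.rpow_def_of_pos hΓx, ← Real.rpow_def_of_pos (by positivity),
      ← Real.sqrt_eq_rpow, ← Real.sqrt_eq_rpow, ← Real.sqrt_mul hΓx.le,
      show Real.Gamma x * (x * Real.Gamma x) = x * Real.Gamma x ^ 2 by ring,
      Real.sqrt_mul hx.le, Real.sqrt_sq hΓx.le]
  ring

lemma key_real (n : ℕ) {ζ : ℝ} (hζ0 : 0 ≤ ζ) :
    2 * (ζ / Real.sqrt ((n:ℝ)+1)) * (Real.sqrt Real.pi ^ n / Real.Gamma ((n:ℝ)/2+1))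
      ≤ (2 / Real.sqrt Real.pi * ζ)
        * (Real.sqrt Real.pi ^ (n+1) / Real.Gamma (((n:ℝ)+1)/2+1)) := by
  have hπ : 0 < Real.sqrt Real.pi := Real.sqrt_pos.2 Real.pi_pos
  set x : ℝ := (n:ℝ)/2 + 1 with hxdef
  have hx : 0 < x := by positivity
  have hΓx : 0 < Real.Gamma x := Real.Gamma_pos_of_pos hx
  have hG : Real.Gamma (((n:ℝ)+1)/2 + 1) = Real.Gamma (x + 1/2) := by
    rw [hxdef]; ring_nf
  have hΓ2 : 0 < Real.Gamma (((n:ℝ)+1)/2+1) := by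
    rw [hG]; exact Real.Gamma_pos_of_pos (by positivity)
  have hkey : Real.Gamma (((n:ℝ)+1)/2+1) ≤ Real.sqrt ((n:ℝ)+1) * Real.Gamma x := by
    rw [hG]
    refine (gamma_half_le hx).trans ?_
    rw [mul_comm]
    refine mul_le_mul_of_nonneg_right ?_ hΓx.le
    exact Real.sqrt_le_sqrt (by rw [hxdef]; linarith [Nat.cast_nonneg (α := ℝ) n])
  have hsn : 0 < Real.sqrt ((n:ℝ)+1) := Real.sqrt_pos.2 (by positivity)
  have hrw : (2 / Real.sqrt Real.pi * ζ)
        * (Real.sqrt Real.pi ^ (n+1) / Real.Gamma (((n:ℝ)+1)/2+1))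
      = 2 * ζ * Real.sqrt Real.pi ^ n / Real.Gamma (((n:ℝ)+1)/2+1) := by
    field_simp; ring
  have hlw : 2 * (ζ / Real.sqrt ((n:ℝ)+1)) * (Real.sqrt Real.pi ^ n / Real.Gamma x)
      = 2 * ζ * Real.sqrt Real.pi ^ n / (Real.sqrt ((n:ℝ)+1) * Real.Gamma x) := by
    field_simp
  rw [hrw, hlw]
  exact div_le_div_of_nonneg_left (by positivity) hΓ2 hkey

lemma volume_pi_sumsq (n : ℕ) :
    volume {x : Fin n → ℝ | ∑ j, x j ^ 2 ≤ 1}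
      = ENNReal.ofReal (Real.sqrt Real.pi ^ n / Real.Gamma (n/2+1)) := by
  rcases Nat.eq_zero_or_pos n with rfl | hn
  · have : {x : Fin 0 → ℝ | ∑ j, x j ^ 2 ≤ 1} = Set.univ := by
      ext x; simp
    rw [this, show (volume : Measure (Fin 0 → ℝ)) = Measure.pi fun _ => volume from rfl,
      Measure.pi_univ]
    simp [Real.Gamma_one]
  · haveI : Nonempty (Fin n) := ⟨⟨0, hn⟩⟩
    have hmp : MeasurePreserving ((MeasurableEquiv.toLp 2 (Fin n → ℝ)).symm).symm volume volume :=
      (EuclideanSpace.volume_preserving_symm_measurableEquiv_toLp (Fin n)).symm _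
    have hset : {x : Fin n → ℝ | ∑ j, x j ^ 2 ≤ 1}
        = ((MeasurableEquiv.toLp 2 (Fin n → ℝ)).symm).symm ⁻¹' Metric.closedBall 0 1 := by
      ext x
      simp only [Set.mem_setOf_eq, Set.mem_preimage, Metric.mem_closedBall, dist_zero_right,
        EuclideanSpace.norm_eq, MeasurableEquiv.symm_symm, MeasurableEquiv.coe_toLp]
      rw [Real.sqrt_le_one]
      simp [sq_abs]
    rw [hset, hmp.measure_preimage measurableSet_closedBall.nullMeasurableSet,
      EuclideanSpace.volume_closedBall]
    simp

section slab
open scoped RealInnerProductSpace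

lemma slab_ball_volume (n : ℕ) (t : ℝ) :
    volume ({v : EuclideanSpace ℝ (Fin (n+1)) |
        |⟪EuclideanSpace.single 0 (1:ℝ), v⟫| ≤ t} ∩ Metric.closedBall 0 1)
      ≤ ENNReal.ofReal (2*t) * ENNReal.ofReal (Real.sqrt Real.pi ^ n / Real.Gamma (n/2+1)) := by
  have hmp : MeasurePreserving ((MeasurableEquiv.toLp 2 (Fin (n+1) → ℝ)).symm).symm volume volume :=
    (EuclideanSpace.volume_preserving_symm_measurableEquiv_toLp (Fin (n+1))).symm _
  set S := {v : EuclideanSpace ℝ (Fin (n+1)) |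
        |⟪EuclideanSpace.single 0 (1:ℝ), v⟫| ≤ t} ∩ Metric.closedBall 0 1 with hS
  have hmeasS : MeasurableSet S := by
    refine MeasurableSet.inter ?_ measurableSet_closedBall
    exact (isClosed_le ((continuous_const.inner continuous_id).abs) continuous_const).measurableSet
  rw [← hmp.measure_preimage hmeasS.nullMeasurableSet]
  set ψ := MeasurableEquiv.piFinSuccAbove (fun _ : Fin (n+1) => ℝ) 0 with hψ
  have hψmp : MeasurePreserving ψ volume volume :=
    volume_preserving_piFinSuccAbove (fun _ : Fin (n+1) => ℝ) 0
  have hsub : ((MeasurableEquiv.toLp 2 (Fin (n+1) → ℝ)).symm).symm ⁻¹' S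
      ⊆ ψ ⁻¹' ((Set.Icc (-t) t) ×ˢ {x : Fin n → ℝ | ∑ j, x j ^ 2 ≤ 1}) := by
    intro x hx
    obtain ⟨hx1, hx2⟩ := hx
    have hco : ∀ i, (((MeasurableEquiv.toLp 2 (Fin (n+1) → ℝ)).symm).symm x) i = x i := fun _ => rfl
    simp only [Set.mem_setOf_eq, EuclideanSpace.inner_single_left, hco, map_one, one_mul] at hx1
    simp only [Set.mem_preimage, Metric.mem_closedBall, dist_zero_right,
      EuclideanSpace.norm_eq, hco] at hx2
    rw [Real.sqrt_le_one] at hx2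
    simp only [Real.norm_eq_abs, sq_abs] at hx2
    constructor
    · show -t ≤ x 0 ∧ x 0 ≤ t; simpa [abs_le] using hx1
    · have : ∑ i : Fin (n+1), x i ^ 2 = x 0 ^ 2 + ∑ j : Fin n, x j.succ ^ 2 :=
        Fin.sum_univ_succ _
      have hsum : ∑ j : Fin n, x j.succ ^ 2 ≤ 1 := by nlinarith [sq_nonneg (x 0)]
      show (0 : Fin (n+1)).removeNth x ∈ _
      simp only [Set.mem_setOf_eq, Fin.removeNth, Fin.zero_succAbove]
      exact hsum
  refine (measure_mono hsub).trans ?_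
  rw [hψmp.measure_preimage ?_]
  · rw [Measure.volume_eq_prod, Measure.prod_prod, Real.volume_Icc, volume_pi_sumsq]
    have : t - (-t) = 2 * t := by ring
    rw [this]
  · refine (MeasurableSet.prod measurableSet_Icc ?_).nullMeasurableSet
    exact (isClosed_le (by continuity) continuous_const).measurableSet

end slab


section main
open scoped RealInnerProductSpace

/-- Coordinate concentration for the uniform (rotation-invariant) probability measure on
the unit sphere `S^{d-1} ⊆ ℝ^d`: the probability that `|y₁| ≤ ζ/√d` is at most `(2/√π)·ζ`. -/
theorem sphere_first_coordinate_concentration (d : ℕ) (hd : 1 ≤ d)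
    (μ : Measure (EuclideanSpace ℝ (Fin d))) [IsProbabilityMeasure μ]
    (hsphere : μ (Metric.sphere (0 : EuclideanSpace ℝ (Fin d)) 1) = 1)
    (hrot : ∀ T : EuclideanSpace ℝ (Fin d) ≃ₗᵢ[ℝ] EuclideanSpace ℝ (Fin d),
      Measure.map T μ = μ)
    (ζ : ℝ) (hζ : ζ ≤ 1) :
    μ {y : EuclideanSpace ℝ (Fin d) | |y ⟨0, hd⟩| ≤ ζ / Real.sqrt d}
      ≤ ENNReal.ofReal (2 / Real.sqrt Real.pi * ζ) := by
  obtain ⟨n, rfl⟩ : ∃ n, d = n + 1 := ⟨d - 1, (Nat.succ_pred_eq_of_pos hd).symm⟩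
  have hcast : ((n+1 : ℕ) : ℝ) = (n : ℝ) + 1 := by push_cast; ring
  have hsd : (0:ℝ) < Real.sqrt ((n+1 : ℕ) : ℝ) := Real.sqrt_pos.2 (by positivity)
  set t : ℝ := ζ / Real.sqrt ((n+1 : ℕ) : ℝ) with htdef
  rcases lt_or_ge ζ 0 with hneg | hζ0
  · have hset : {y : EuclideanSpace ℝ (Fin (n+1)) | |y ⟨0, hd⟩| ≤ t} = ∅ := by
      ext y
      simp only [Set.mem_setOf_eq, Set.mem_empty_iff_false, iff_false, not_le]
      have : t < 0 := div_neg_of_neg_of_pos hneg hsd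
      exact this.trans_le (abs_nonneg _)
    rw [show {y : EuclideanSpace ℝ (Fin (n+1)) | |y ⟨0, hd⟩| ≤ ζ / Real.sqrt ((n+1 : ℕ):ℝ)}
        = ∅ from hset]
    simp
  have ht0 : 0 ≤ t := div_nonneg hζ0 hsd.le
  set e₁ : EuclideanSpace ℝ (Fin (n+1)) := EuclideanSpace.single 0 (1:ℝ) with he₁
  have hne₁ : ‖e₁‖ = 1 := by rw [he₁, EuclideanSpace.norm_single, norm_one]
  set S : EuclideanSpace ℝ (Fin (n+1)) → Set (EuclideanSpace ℝ (Fin (n+1))) :=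
    fun v => {y | |⟪v, y⟫| ≤ t * ‖v‖} with hSdef
  have hSmeas : ∀ v, MeasurableSet (S v) := fun v =>
    (isClosed_le ((continuous_const.inner continuous_id).abs) continuous_const).measurableSet
  have hinner : ∀ y : EuclideanSpace ℝ (Fin (n+1)), ⟪e₁, y⟫ = y 0 := by
    intro y
    rw [he₁]
    simp [EuclideanSpace.inner_single_left]
  have hA : {y : EuclideanSpace ℝ (Fin (n+1)) | |y ⟨0, hd⟩| ≤ t}
      = S e₁ := by
    ext y
    simp only [hSdef, Set.mem_setOf_eq, hinner y, hne₁, mul_one]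
    exact Iff.rfl
  have hSv : ∀ v : EuclideanSpace ℝ (Fin (n+1)), v ≠ 0 → μ (S v) = μ (S e₁) := by
    intro v hv
    have hnv : 0 < ‖v‖ := norm_pos_iff.2 hv
    set u : EuclideanSpace ℝ (Fin (n+1)) := ‖v‖⁻¹ • v with hu
    have hnu : ‖u‖ = 1 := norm_smul_inv_norm hv
    have hSveq : S v = S u := by
      ext y
      simp only [hSdef, Set.mem_setOf_eq, hu, real_inner_smul_left, hnu, norm_smul, norm_inv, norm_norm,
        inv_mul_cancel₀ hnv.ne', mul_one, abs_mul,
        abs_inv, abs_norm]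
      rw [inv_mul_le_iff₀ hnv, mul_comm]
    obtain ⟨T, hT⟩ := exists_isometry_map_eq e₁ u (hne₁.trans hnu.symm)
    have hpre : S u = T.symm ⁻¹' (S e₁) := by
      ext y
      have h1 : ⟪u, y⟫ = ⟪e₁, T.symm y⟫ := by
        rw [← hT, ← T.inner_map_map e₁ (T.symm y), T.apply_symm_apply]
      simp only [hSdef, Set.mem_setOf_eq, Set.mem_preimage, h1, hnu, hne₁]
    calc μ (S v) = μ (T.symm ⁻¹' (S e₁)) := by rw [hSveq, hpre]
      _ = (Measure.map T.symm μ) (S e₁) := by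
          rw [Measure.map_apply (T.symm.continuous.measurable) (hSmeas e₁)]
      _ = μ (S e₁) := by rw [hrot T.symm]
  set B : Set (EuclideanSpace ℝ (Fin (n+1))) := Metric.closedBall 0 1 with hB
  set ν : Measure (EuclideanSpace ℝ (Fin (n+1))) := volume.restrict B with hν
  have hvol0 : volume ({0} : Set (EuclideanSpace ℝ (Fin (n+1)))) = 0 := by
    rw [← Metric.closedBall_zero, EuclideanSpace.volume_closedBall]
    simp
  have hae : ∀ᵐ v ∂ν, μ (S v) = μ (S e₁) := by
    rw [ae_iff]
    refine measure_mono_null (fun v hv => ?_)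
      (show ν {(0 : EuclideanSpace ℝ (Fin (n+1)))} = 0 from ?_)
    · simp only [Set.mem_setOf_eq] at hv
      by_contra h0
      exact hv (hSv v (by simpa using h0))
    · refine le_antisymm ?_ zero_le
      calc ν {(0 : EuclideanSpace ℝ (Fin (n+1)))}
            = volume ({0} ∩ B : Set (EuclideanSpace ℝ (Fin (n+1)))) :=
          Measure.restrict_apply (measurableSet_singleton _)
        _ ≤ volume ({0} : Set (EuclideanSpace ℝ (Fin (n+1)))) :=
          measure_mono Set.inter_subset_left
        _ = 0 := hvol0
  set C : Set (EuclideanSpace ℝ (Fin (n+1)) × EuclideanSpace ℝ (Fin (n+1))) :=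
    {p | |⟪p.1, p.2⟫| ≤ t * ‖p.1‖} with hCdef
  have hC : MeasurableSet C := by
    have h : IsClosed {p : EuclideanSpace ℝ (Fin (n+1)) × EuclideanSpace ℝ (Fin (n+1)) |
        |⟪p.1, p.2⟫| ≤ t * ‖p.1‖} :=
      isClosed_le (continuous_inner (𝕜 := ℝ)).abs (continuous_const.mul continuous_fst.norm)
    exact h.measurableSet
  set f : EuclideanSpace ℝ (Fin (n+1)) → EuclideanSpace ℝ (Fin (n+1)) → ENNReal :=
    fun v y => C.indicator 1 (v, y) with hfdef
  have hf : AEMeasurable (Function.uncurry f) (ν.prod μ) := by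
    have huncurry : Function.uncurry f = C.indicator 1 := rfl
    rw [huncurry]
    exact (measurable_one.indicator hC).aemeasurable
  have hfv : ∀ v, ∫⁻ y, f v y ∂μ = μ (S v) := by
    intro v
    have hfi : (fun y => f v y) = (S v).indicator 1 := by
      funext y
      simp only [hfdef, Set.indicator_apply]
      rfl
    rw [hfi, lintegral_indicator_one (hSmeas v)]
  have hCy : ∀ y : EuclideanSpace ℝ (Fin (n+1)),
      MeasurableSet {v : EuclideanSpace ℝ (Fin (n+1)) | |⟪v, y⟫| ≤ t * ‖v‖} := fun y =>
    (isClosed_le ((continuous_id.inner continuous_const).abs)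
      (continuous_const.mul continuous_norm)).measurableSet
  have hfy : ∀ y, ∫⁻ v, f v y ∂ν
      = ν {v : EuclideanSpace ℝ (Fin (n+1)) | |⟪v, y⟫| ≤ t * ‖v‖} := by
    intro y
    have hfi : (fun v => f v y)
        = Set.indicator {v : EuclideanSpace ℝ (Fin (n+1)) | |⟪v, y⟫| ≤ t * ‖v‖} 1 := by
      funext v
      simp only [hfdef, Set.indicator_apply]
      rfl
    rw [hfi, lintegral_indicator_one (hCy y)]
  have hyae : ∀ᵐ y ∂μ, ‖y‖ = 1 := by
    have hc : μ (Metric.sphere (0 : EuclideanSpace ℝ (Fin (n+1))) 1)ᶜ = 0 := by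
      have hcompl := measure_compl (μ := μ)
        (s := Metric.sphere (0 : EuclideanSpace ℝ (Fin (n+1))) 1)
        Metric.isClosed_sphere.measurableSet (measure_ne_top μ _)
      rw [hsphere, measure_univ] at hcompl
      simpa using hcompl
    rw [ae_iff]
    refine measure_mono_null (fun y hy => ?_) hc
    simp only [Set.mem_setOf_eq] at hy
    simp only [Set.mem_compl_iff, Metric.mem_sphere, dist_zero_right]
    exact hy
  set Vn : ENNReal := ENNReal.ofReal (Real.sqrt Real.pi ^ n / Real.Gamma ((n:ℝ)/2+1)) with hVn
  have hbound : ∀ᵐ y ∂μ, ∫⁻ v, f v y ∂ν ≤ ENNReal.ofReal (2*t) * Vn := by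
    filter_upwards [hyae] with y hy
    rw [hfy y, hν, Measure.restrict_apply (hCy y)]
    have hsubset : ({v : EuclideanSpace ℝ (Fin (n+1)) | |⟪v, y⟫| ≤ t * ‖v‖} ∩ B)
        ⊆ ({v : EuclideanSpace ℝ (Fin (n+1)) | |⟪y, v⟫| ≤ t} ∩ B) := by
      rintro v ⟨hv1, hv2⟩
      refine Set.mem_inter ?_ hv2
      simp only [Set.mem_setOf_eq] at hv1 ⊢
      have hvb : ‖v‖ ≤ 1 := by
        rw [hB] at hv2
        simpa [mem_closedBall_zero_iff] using hv2
      calc |⟪y, v⟫| = |⟪v, y⟫| := by rw [real_inner_comm]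
        _ ≤ t * ‖v‖ := hv1
        _ ≤ t * 1 := mul_le_mul_of_nonneg_left hvb ht0
        _ = t := mul_one t
    refine (measure_mono hsubset).trans ?_
    obtain ⟨T, hT⟩ := exists_isometry_map_eq e₁ y (hne₁.trans hy.symm)
    have hseteq : ({v : EuclideanSpace ℝ (Fin (n+1)) | |⟪y, v⟫| ≤ t} ∩ B)
        = T.symm ⁻¹' ({v : EuclideanSpace ℝ (Fin (n+1)) | |⟪e₁, v⟫| ≤ t} ∩ B) := by
      ext v
      have h1 : ⟪y, v⟫ = ⟪e₁, T.symm v⟫ := by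
        rw [← hT, ← T.inner_map_map e₁ (T.symm v), T.apply_symm_apply]
      simp only [Set.mem_inter_iff, Set.mem_setOf_eq, Set.mem_preimage, h1, hB,
        Metric.mem_closedBall, dist_zero_right, T.symm.norm_map]
    rw [hseteq]
    have hmeas2 : MeasurableSet
        ({v : EuclideanSpace ℝ (Fin (n+1)) | |⟪e₁, v⟫| ≤ t} ∩ B) := by
      refine MeasurableSet.inter ?_ measurableSet_closedBall
      exact (isClosed_le ((continuous_const.inner continuous_id).abs)
        continuous_const).measurableSet
    rw [T.symm.measurePreserving.measure_preimage hmeas2.nullMeasurableSet]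
    rw [he₁, hB]
    exact slab_ball_volume n t
  have hμA : μ (S e₁) * volume B ≤ ENNReal.ofReal (2*t) * Vn := by
    calc μ (S e₁) * volume B = ∫⁻ _, μ (S e₁) ∂ν := by
          rw [lintegral_const, hν, Measure.restrict_apply_univ]
      _ = ∫⁻ v, μ (S v) ∂ν := (lintegral_congr_ae hae).symm
      _ = ∫⁻ v, ∫⁻ y, f v y ∂μ ∂ν := lintegral_congr fun v => (hfv v).symm
      _ = ∫⁻ y, ∫⁻ v, f v y ∂ν ∂μ := lintegral_lintegral_swap hf
      _ ≤ ∫⁻ _, ENNReal.ofReal (2*t) * Vn ∂μ := lintegral_mono_ae hbound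
      _ = ENNReal.ofReal (2*t) * Vn := by rw [lintegral_const, measure_univ, mul_one]
  have hvolB : volume B = ENNReal.ofReal
      (Real.sqrt Real.pi ^ (n+1) / Real.Gamma (((n:ℝ)+1)/2+1)) := by
    rw [hB, EuclideanSpace.volume_closedBall]
    simp [hcast]
  have hΓpos : 0 < Real.Gamma (((n:ℝ)+1)/2+1) := Real.Gamma_pos_of_pos (by positivity)
  have hπpos : 0 < Real.sqrt Real.pi := Real.sqrt_pos.2 Real.pi_pos
  have hVBpos : volume B ≠ 0 := by
    rw [hvolB]
    exact (ENNReal.ofReal_pos.2 (by positivity)).ne'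
  have hVBtop : volume B ≠ ⊤ := by rw [hvolB]; exact ENNReal.ofReal_ne_top
  have hfinal : ENNReal.ofReal (2*t) * Vn
      ≤ ENNReal.ofReal (2 / Real.sqrt Real.pi * ζ) * volume B := by
    rw [hvolB, hVn, ← ENNReal.ofReal_mul (by positivity), ← ENNReal.ofReal_mul (by positivity)]
    refine ENNReal.ofReal_le_ofReal ?_
    have hk := key_real n hζ0
    rw [htdef, hcast]
    exact hk
  rw [hA, ← ENNReal.mul_le_mul_iff_left hVBpos hVBtop]
  exact hμA.trans hfinal

end main
end

section
/- Let Q ⊆ ℝ^d be a convex set containing a Euclidean ball B(x*, ε) with center x* ∈ B(0,1) and ε ≤ 1. Suppose x_t is a sequence with x₀ = 0 such that at every step t, either x_t ∈ Q, or there exist vectors g_t with ‖g_t‖ = 1 and g_t^⊤(x' - x_t) ≥ 0 for all x' ∈ Q, and the update satisfies ‖x_{t+1} - (x_t + ε g̃_t)‖ ≤ η and ‖g̃_t - g_t‖ ≤ η with η = ε²/40. Then after at most T = 8/ε² steps the process must reach a point in Q; i.e., there exists t ≤ T with x_t ∈ Q. -/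
/-!
The potential `‖x t - x*‖²` starts at most `1` and, as long as `x t ∉ Q`, drops by `ε²/2` per step:
the exact step `x t + ε • g` already lowers it by `ε²`, because the separation vector at `x t`
makes an inner product at least `ε` with `x* - x t` (test it on `x* - ε • g ∈ Q`), and the two
errors of size `ε²/40` cost at most `ε²/2` of that. A nonnegative potential can only do this
for `2/ε²` steps.
-/

open Metric
open scoped RealInnerProductSpace

section InexactStep

variable {E : Type*} [NormedAddCommGroup E] [InnerProductSpace ℝ E]

theorem le_inner_sub_of_closedBall_subset {Q : Set E} {c x g : E} {ε : ℝ} (hε : 0 ≤ ε)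
    (hball : closedBall c ε ⊆ Q) (hg : ‖g‖ = 1) (hsep : ∀ q ∈ Q, 0 ≤ ⟪g, q - x⟫) :
    ε ≤ ⟪g, c - x⟫ := by
  have hmem : c - ε • g ∈ Q := hball <| by
    rw [mem_closedBall, dist_eq_norm, sub_sub_cancel_left, norm_neg, norm_smul, hg, mul_one,
      Real.norm_of_nonneg hε]
  have h := hsep _ hmem
  rw [sub_right_comm, inner_sub_right, real_inner_smul_right, real_inner_self_eq_norm_sq, hg]
    at h
  linarith

theorem norm_add_smul_sub_sq_le {c x g : E} {ε : ℝ} (hε : 0 ≤ ε) (hg : ‖g‖ = 1)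
    (hinner : ε ≤ ⟪g, c - x⟫) :
    ‖x + ε • g - c‖ ^ 2 ≤ ‖x - c‖ ^ 2 - ε ^ 2 := by
  have hcross : ⟪x - c, g⟫ = -⟪g, c - x⟫ := by
    rw [real_inner_comm, ← inner_neg_right, neg_sub]
  rw [add_sub_right_comm, norm_add_sq_real, real_inner_smul_right, norm_smul, hg, hcross,
    Real.norm_of_nonneg hε]
  nlinarith

theorem norm_sub_add_smul_le (x x' g g' : E) (ε : ℝ) :
    ‖x' - (x + ε • g)‖ ≤ ‖x' - (x + ε • g')‖ + ‖ε‖ * ‖g' - g‖ := by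
  have hsplit : x' - (x + ε • g) = (x' - (x + ε • g')) + ε • (g' - g) := by
    rw [smul_sub]; abel
  rw [hsplit, ← norm_smul]
  exact norm_add_le _ _

theorem norm_sub_sq_le_of_inexact_step {Q : Set E} {c x x' g g' : E} {ε : ℝ} (hε : 0 ≤ ε)
    (hε1 : ε ≤ 1) (hball : closedBall c ε ⊆ Q) (hg : ‖g‖ = 1)
    (hsep : ∀ q ∈ Q, 0 ≤ ⟪g, q - x⟫) (hg' : ‖g' - g‖ ≤ ε ^ 2 / 40)
    (hx' : ‖x' - (x + ε • g')‖ ≤ ε ^ 2 / 40) (hx : ‖x - c‖ ≤ 1) :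
    ‖x' - c‖ ^ 2 ≤ ‖x - c‖ ^ 2 - ε ^ 2 / 2 := by
  set y := x + ε • g
  have hy : ‖y - c‖ ^ 2 ≤ ‖x - c‖ ^ 2 - ε ^ 2 :=
    norm_add_smul_sub_sq_le hε hg (le_inner_sub_of_closedBall_subset hε hball hg hsep)
  have hy1 : ‖y - c‖ ≤ 1 := by
    nlinarith [norm_nonneg (y - c), norm_nonneg (x - c)]
  have herr : ‖x' - y‖ ≤ ε ^ 2 / 20 := by
    have h := norm_sub_add_smul_le x x' g g' ε
    rw [Real.norm_of_nonneg hε] at h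
    nlinarith [norm_nonneg (g' - g)]
  have htri : ‖x' - c‖ ≤ ‖y - c‖ + ε ^ 2 / 20 := by
    linarith [norm_sub_le_norm_sub_add_norm_sub x' y c]
  have hε2 : ε ^ 2 ≤ 1 := pow_le_one₀ hε hε1
  nlinarith [norm_nonneg (x' - c), norm_nonneg (y - c)]

end InexactStep

theorem exists_le_div_of_potential_decrease {P : ℕ → Prop} {φ : ℕ → ℝ} {C δ : ℝ} (hδ : 0 < δ)
    (hφ0 : φ 0 ≤ C) (hφ_nonneg : ∀ t, 0 ≤ φ t)
    (hdecr : ∀ t, ¬P t → φ t ≤ C → φ (t + 1) ≤ φ t - δ) :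
    ∃ t : ℕ, (t : ℝ) ≤ C / δ ∧ P t := by
  by_contra! hnone
  have hbound : ∀ t : ℕ, (t : ℝ) ≤ C / δ + 1 → φ t ≤ C - t * δ := by
    intro t
    induction t with
    | zero => intro _; simpa using hφ0
    | succ n ih =>
      intro hn
      have hn' : (n : ℝ) ≤ C / δ := by push_cast at hn; linarith
      have hφn := ih (by linarith)
      have hnδ : 0 ≤ n * δ := by positivity
      have hφsucc := hdecr n (hnone n hn') (by linarith)
      push_cast
      linarith
  set N := ⌊C / δ⌋₊ + 1
  have hC : 0 ≤ C := (hφ_nonneg 0).trans hφ0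
  have hN : C / δ < N := by simpa [N] using Nat.lt_floor_add_one (C / δ)
  have hNle : (N : ℝ) ≤ C / δ + 1 := by
    push_cast [N]; linarith [Nat.floor_le (div_nonneg hC hδ.le)]
  have hφN := hbound N hNle
  have hNδ : C < N * δ := (div_lt_iff₀ hδ).mp hN
  linarith [hφ_nonneg N]

theorem gradient_descent_feasibility_general (d : ℕ) (Q : Set (EuclideanSpace ℝ (Fin d)))
    (xstar : EuclideanSpace ℝ (Fin d)) (hxstar : ‖xstar‖ ≤ 1)
    (ε : ℝ) (hε : 0 < ε) (hε1 : ε ≤ 1)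
    (hball : Metric.closedBall xstar ε ⊆ Q)
    (x : ℕ → EuclideanSpace ℝ (Fin d)) (hx0 : x 0 = 0)
    (hstep : ∀ t : ℕ, x t ∉ Q →
      ∃ g gtil : EuclideanSpace ℝ (Fin d), ‖g‖ = 1 ∧
        (∀ x' ∈ Q, (0 : ℝ) ≤ inner ℝ g (x' - x t)) ∧
        ‖gtil - g‖ ≤ ε ^ 2 / 40 ∧
        ‖x (t + 1) - (x t + ε • gtil)‖ ≤ ε ^ 2 / 40) :
    ∃ t : ℕ, (t : ℝ) ≤ 8 / ε ^ 2 ∧ x t ∈ Q := by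
  have hφ0 : ‖x 0 - xstar‖ ^ 2 ≤ 1 := by
    rw [hx0, zero_sub, norm_neg]
    exact pow_le_one₀ (norm_nonneg _) hxstar
  have hdecr (t : ℕ) (hnot : x t ∉ Q) (hφt : ‖x t - xstar‖ ^ 2 ≤ 1) :
      ‖x (t + 1) - xstar‖ ^ 2 ≤ ‖x t - xstar‖ ^ 2 - ε ^ 2 / 2 := by
    obtain ⟨g, gtil, hg, hsep, hgtil, hupd⟩ := hstep t hnot
    exact norm_sub_sq_le_of_inexact_step hε.le hε1 hball hg hsep hgtil hupd
      ((sq_le_one_iff₀ (norm_nonneg _)).mp hφt)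
  obtain ⟨t, ht, hxt⟩ := exists_le_div_of_potential_decrease (by positivity) hφ0
    (fun _ ↦ sq_nonneg _) hdecr
  refine ⟨t, ht.trans ?_, hxt⟩
  rw [one_div_div]
  gcongr
  norm_num

/-- Correctness of memory-constrained gradient descent for the feasibility problem:
if `Q` is convex and contains a ball `B(x*, ε)` with `‖x*‖ ≤ 1`, and the iterates follow
inexact separation-vector updates with accuracy `η = ε²/40`, then within `8/ε²` steps
the process reaches a point of `Q`. -/
theorem gradient_descent_feasibility (d : ℕ) (Q : Set (EuclideanSpace ℝ (Fin d)))
    (hQ : Convex ℝ Q) (xstar : EuclideanSpace ℝ (Fin d)) (hxstar : ‖xstar‖ ≤ 1)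
    (ε : ℝ) (hε : 0 < ε) (hε1 : ε ≤ 1)
    (hball : Metric.closedBall xstar ε ⊆ Q)
    (x : ℕ → EuclideanSpace ℝ (Fin d)) (hx0 : x 0 = 0)
    (hstep : ∀ t : ℕ, x t ∉ Q →
      ∃ g gtil : EuclideanSpace ℝ (Fin d), ‖g‖ = 1 ∧
        (∀ x' ∈ Q, (0 : ℝ) ≤ inner ℝ g (x' - x t)) ∧
        ‖gtil - g‖ ≤ ε ^ 2 / 40 ∧
        ‖x (t + 1) - (x t + ε • gtil)‖ ≤ ε ^ 2 / 40) :
    ∃ t : ℕ, (t : ℝ) ≤ 8 / ε ^ 2 ∧ x t ∈ Q :=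
  gradient_descent_feasibility_general d Q xstar hxstar ε hε hε1 hball x hx0 hstep
end
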